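/- arXiv:1712.05747 — 10 statements merged into one kernel-verified Lean document; each statement's English description precedes it below -/
import Mathlib

section
/- For all integers k ≥ 1, r ≥ 1 and j ≥ 0, the two k×k determinants det((C(r+k+j-i-1, j+l-i))_{1≤i,l≤k}) and det((C(r+j-1, j+l-i))_{1≤i,l≤k}) are equal. (In the paper's notation this says {r+k-1, …, r+k-1}_j = [r, …, r]_j.) -/
/-!
Interpolate between the two matrices by the staircase of matrices whose row `i` has upper
index `r + j - 1 + (s - i)⁺`, `s = k - 1, …, 0`. Passing from `s + 1` to `s` lowers the upper
index of each row `i ≤ s` by one; by Pascal's rule this amounts to subtracting from each of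
those rows the row below it, which preserves the determinant.
-/

/-- Binomial coefficient `C(a,b)` for integers, with the convention that it is `0`
whenever `b < 0` or `b > a`. -/
def icb (a b : ℤ) : ℤ := if 0 ≤ b ∧ b ≤ a then (a.toNat.choose b.toNat : ℤ) else 0

open Matrix

theorem icb_natCast (n : ℕ) (m : ℤ) :
    icb n m = if 0 ≤ m then (n.choose m.toNat : ℤ) else 0 := by
  by_cases hm : 0 ≤ m
  · by_cases hmn : m ≤ n
    · simp [icb, hm, hmn]
    · simp [icb, hm, hmn, Nat.choose_eq_zero_of_lt (show n < m.toNat by omega)]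
  · simp [icb, hm]

theorem icb_add_one (n m : ℤ) (hn : 0 ≤ n) :
    icb (n + 1) m = icb n m + icb n (m - 1) := by
  lift n to ℕ using hn
  rw [← Nat.cast_add_one, icb_natCast, icb_natCast, icb_natCast]
  rcases lt_trichotomy m 0 with hm | rfl | hm
  · simp [not_le.2 hm, show ¬ 1 ≤ m by omega]
  · simp
  · obtain ⟨m, rfl⟩ : ∃ m' : ℕ, m = m' + 1 := ⟨(m - 1).toNat, by omega⟩
    rw [if_pos (by omega), if_pos (by omega), if_pos (by omega)]
    simp [Nat.choose_succ_succ', add_comm]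

theorem Matrix.det_eq_of_forall_row_eq_smul_add_succ {R : Type*} [CommRing R] {n : ℕ}
    {A B : Matrix (Fin (n + 1)) (Fin (n + 1)) R} (c : Fin n → R)
    (A_last : ∀ j, A (Fin.last n) j = B (Fin.last n) j)
    (A_castSucc : ∀ (i : Fin n) (j), A i.castSucc j = B i.castSucc j + c i * A i.succ j) :
    det A = det B := by
  have h : det (A.submatrix Fin.revPerm id) = det (B.submatrix Fin.revPerm id) :=
    det_eq_of_forall_row_eq_smul_add_pred (fun i => c i.rev) (by simpa using A_last)
      (fun i j => by simpa [Fin.rev_succ, Fin.rev_castSucc] using A_castSucc i.rev j)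
  rw [det_permute, det_permute] at h
  exact ((Equiv.Perm.sign _).isUnit.map (Int.castRingHom R)).mul_left_cancel h

/-- With `c = r + j - 1`, this is the right-hand matrix of the theorem at `s = 0` and the
left-hand one at `s = n`. -/
def stairMatrix (n : ℕ) (c j : ℤ) (s : ℕ) : Matrix (Fin (n + 1)) (Fin (n + 1)) ℤ :=
  of fun i l => icb (c + ((s - i : ℕ) : ℤ)) (j + ((l : ℕ) : ℤ) - ((i : ℕ) : ℤ))

theorem det_stairMatrix_succ (n : ℕ) (c j : ℤ) (hc : 0 ≤ c) (s : ℕ) (hs : s < n) :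
    det (stairMatrix n c j (s + 1)) = det (stairMatrix n c j s) := by
  refine det_eq_of_forall_row_eq_smul_add_succ (fun i => if (i : ℕ) ≤ s then 1 else 0)
    (fun l => ?_) (fun i l => ?_)
  · simp only [stairMatrix, of_apply, Fin.val_last, Nat.sub_eq_zero_of_le hs,
      Nat.sub_eq_zero_of_le hs.le]
  · simp only [stairMatrix, of_apply, Fin.val_castSucc, Fin.val_succ]
    split_ifs with hi
    · rw [one_mul, show c + ((s + 1 - i : ℕ) : ℤ) = c + ((s - i : ℕ) : ℤ) + 1 by omega,
        icb_add_one _ _ (by omega), Nat.add_sub_add_right]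
      congr 2
      push_cast
      ring
    · rw [zero_mul, add_zero, Nat.sub_eq_zero_of_le (by omega), Nat.sub_eq_zero_of_le (by omega)]

theorem det_stairMatrix_eq_det_stairMatrix_zero (n : ℕ) (c j : ℤ) (hc : 0 ≤ c) (s : ℕ)
    (hs : s ≤ n) : det (stairMatrix n c j s) = det (stairMatrix n c j 0) := by
  induction s with
  | zero => rfl
  | succ s ih => rw [det_stairMatrix_succ n c j hc s hs, ih (by omega)]

/-- The indices `i, l : Fin k` are `0`-based: they stand for the paper's `i - 1, l - 1`. -/
theorem stmt0 (k : ℕ) (hk : 1 ≤ k) (r j : ℤ) (hr : 1 ≤ r) (hj : 0 ≤ j) :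
    Matrix.det (Matrix.of fun i l : Fin k =>
      icb (r + k + j - ((i : ℕ) : ℤ) - 2) (j + ((l : ℕ) : ℤ) - ((i : ℕ) : ℤ))) =
    Matrix.det (Matrix.of fun i l : Fin k =>
      icb (r + j - 1) (j + ((l : ℕ) : ℤ) - ((i : ℕ) : ℤ))) := by
  obtain ⟨n, rfl⟩ : ∃ n, k = n + 1 := ⟨k - 1, by omega⟩
  have hlhs : (of fun i l : Fin (n + 1) =>
      icb (r + ↑(n + 1) + j - ((i : ℕ) : ℤ) - 2) (j + ((l : ℕ) : ℤ) - ((i : ℕ) : ℤ))) =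
      stairMatrix n (r + j - 1) j n := by
    ext i l
    simp only [stairMatrix, of_apply]
    congr 1
    omega
  have hrhs : (of fun i l : Fin (n + 1) => icb (r + j - 1) (j + ((l : ℕ) : ℤ) - ((i : ℕ) : ℤ))) =
      stairMatrix n (r + j - 1) j 0 := by
    ext i l
    simp [stairMatrix]
  rw [hlhs, hrhs]
  exact det_stairMatrix_eq_det_stairMatrix_zero n _ j (by omega) n le_rfl
end

section
/- For all integers k ≥ 1, r ≥ 1 and j ≥ 0, the multiset k-Narayana number, defined as the k×k determinant det((C(r+j-1, j+l-i))_{1≤i,l≤k}), equals the product ∏_{i=1}^{k} C(r+i+j-2, r-1) / C(r+i-2, r-1) of rational numbers. -/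
open Polynomial Finset Matrix

lemma prod_asc (a m : ℕ) :
    (a.factorial : ℚ) * ∏ t ∈ Finset.range m, ((a : ℚ) + 1 + t) = (a + m).factorial := by
  induction m with
  | zero => simp
  | succ m ih =>
    rw [Finset.prod_range_succ, ← mul_assoc, ih]
    push_cast [← Nat.add_assoc, Nat.factorial_succ]
    ring

lemma prod_asc' (a m : ℕ) :
    ∏ t ∈ Finset.range m, ((a : ℚ) + 1 + t) = ((a + m).factorial : ℚ) / (a.factorial : ℚ) := by
  rw [eq_div_iff (by exact_mod_cast a.factorial_ne_zero), mul_comm, prod_asc]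

lemma entry_eq (k r' j i l : ℕ) (hi : i < k) (hl : l < k) :
    ((j + (k - 1 - i)).factorial * (r' + i).factorial : ℚ) *
      ((icb ((r' : ℤ) + j) ((j : ℤ) + l - i) : ℤ) : ℚ) =
    ((r' + j).factorial : ℚ) * ((∏ t ∈ Finset.Ico (l+1) k, ((j:ℚ) - i + t)) *
      ∏ t ∈ Finset.range l, (((r'+j : ℕ):ℚ) - t - ((j:ℚ) - i))) := by
  rcases lt_or_ge (j + l) i with hcase | hcase
  · have h0 : icb ((r' : ℤ) + j) ((j : ℤ) + l - i) = 0 := by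
      rw [icb, if_neg]; rintro ⟨h1, -⟩; omega
    rw [h0]
    have hz : ∏ t ∈ Finset.Ico (l+1) k, ((j:ℚ) - i + t) = 0 := by
      apply Finset.prod_eq_zero (i := i - j)
      · simp only [Finset.mem_Ico]; omega
      · push_cast [Nat.cast_sub (show j ≤ i by omega)]; ring
    rw [hz]; push_cast; ring
  rcases lt_or_ge (r' + i) l with hcase2 | hcase2
  · have h0 : icb ((r' : ℤ) + j) ((j : ℤ) + l - i) = 0 := by
      rw [icb, if_neg]; rintro ⟨-, h2⟩; omega
    rw [h0]
    have hz : ∏ t ∈ Finset.range l, (((r'+j : ℕ):ℚ) - t - ((j:ℚ) - i)) = 0 := by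
      apply Finset.prod_eq_zero (i := r' + i)
      · simp only [Finset.mem_range]; omega
      · push_cast; ring
    rw [hz]; push_cast; ring
  · set m := j + l - i with hm
    have hle : i ≤ j + l := hcase
    have hmn : m ≤ r' + j := by omega
    have hicb : icb ((r' : ℤ) + j) ((j : ℤ) + l - i) = ((r' + j).choose m : ℤ) := by
      rw [icb, if_pos (by constructor <;> omega)]
      congr 1
      congr 1 <;> omega
    rw [hicb]
    have hm' : (m : ℚ) = (j : ℚ) + l - i := by
      rw [hm]; push_cast [Nat.cast_sub hle]; ring
    have hA : ∏ t ∈ Finset.Ico (l+1) k, ((j:ℚ) - i + t)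
        = ((j + (k - 1 - i)).factorial : ℚ) / (m.factorial : ℚ) := by
      rw [Finset.prod_Ico_eq_prod_range]
      rw [Finset.prod_congr rfl (fun s _ => show (j:ℚ) - i + ((l+1) + s : ℕ) = (m:ℚ) + 1 + s by
        push_cast; rw [hm']; ring)]
      rw [prod_asc']
      have : m + (k - (l+1)) = j + (k - 1 - i) := by omega
      rw [this]
    have hB : ∏ t ∈ Finset.range l, (((r'+j : ℕ):ℚ) - t - ((j:ℚ) - i))
        = ((r' + i).factorial : ℚ) / ((r' + i - l).factorial : ℚ) := by
      rw [← Finset.prod_range_reflect]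
      rw [Finset.prod_congr rfl (fun t ht => show ((r'+j : ℕ):ℚ) - (l - 1 - t : ℕ) - ((j:ℚ) - i)
          = ((r' + i - l : ℕ):ℚ) + 1 + t by
        have h1 : (1:ℕ) + t ≤ l := by simp at ht; omega
        push_cast [Nat.cast_sub (show t ≤ l - 1 by omega), Nat.cast_sub (show 1 ≤ l by omega),
          Nat.cast_sub hcase2]
        ring)]
      rw [prod_asc']
      have : r' + i - l + l = r' + i := by omega
      rw [this]
    rw [hA, hB]
    have hchoose : ((r' + j).choose m : ℚ)
        = ((r'+j).factorial : ℚ) / ((m.factorial : ℚ) * ((r' + i - l).factorial : ℚ)) := by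
      have : r' + j - m = r' + i - l := by omega
      rw [Nat.cast_choose ℚ hmn, this]
    push_cast [hchoose]
    have h1 : (m.factorial : ℚ) ≠ 0 := by exact_mod_cast m.factorial_ne_zero
    have h2 : ((r' + i - l).factorial : ℚ) ≠ 0 := by exact_mod_cast (r' + i - l).factorial_ne_zero
    field_simp

lemma prod_desc (m : ℕ) : ∏ t ∈ Finset.range m, ((m:ℚ) - t) = m.factorial := by
  rw [← Finset.prod_range_reflect]
  rw [Finset.prod_congr rfl fun t ht => show ((m:ℚ) - (m-1-t:ℕ)) = ((0:ℕ):ℚ)+1+t by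
    have h1 : t < m := Finset.mem_range.mp ht
    push_cast [Nat.cast_sub (show t ≤ m - 1 by omega), Nat.cast_sub (show 1 ≤ m by omega)]
    ring]
  rw [prod_asc', Nat.zero_add]
  simp


lemma termwise (r' j i : ℕ) :
    i.factorial * ((r' + j + i).factorial * (r' + i).choose r')
      = (r' + i + j).choose r' * ((j + i).factorial * (r' + i).factorial) := by
  have h1 := Nat.choose_mul_factorial_mul_factorial (Nat.le_add_right r' i)
  rw [Nat.add_sub_cancel_left] at h1
  have h2 := Nat.choose_mul_factorial_mul_factorial (Nat.le_add_right r' (i+j))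
  rw [Nat.add_sub_cancel_left] at h2
  refine Nat.eq_of_mul_eq_mul_left (Nat.factorial_pos r') ?_
  have e1 : r' + j + i = r' + (i + j) := by omega
  have e2 : r' + i + j = r' + (i + j) := by omega
  have e3 : j + i = i + j := by omega
  rw [e1, e2, e3, ← h1, ← h2]
  ring

lemma det_eval_eq {k : ℕ} (p : Fin k → ℚ[X]) (hdeg : ∀ l, (p l).natDegree < k)
    (v w : Fin k → ℚ)
    (hvw : (Matrix.vandermonde v).det = (Matrix.vandermonde w).det) :
    (Matrix.of fun i l => (p l).eval (v i)).det =
      (Matrix.of fun i l => (p l).eval (w i)).det := by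
  have key : ∀ u : Fin k → ℚ, (Matrix.of fun i l => (p l).eval (u i)) =
      Matrix.vandermonde u * (Matrix.of fun d l : Fin k => (p l).coeff d) := by
    intro u
    ext i l
    rw [Matrix.mul_apply, Matrix.of_apply, Polynomial.eval_eq_sum_range' (hdeg l),
      ← Fin.sum_univ_eq_sum_range]
    refine Finset.sum_congr rfl fun d _ => ?_
    simp [Matrix.vandermonde, mul_comm]
  rw [key v, key w, Matrix.det_mul, Matrix.det_mul, hvw]

/-- The multiset `k`-Narayana number `𝔑_k(r,j) = det((C(r+j-1, j+l-i))_{1≤i,l≤k})`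
equals `∏_{i=1}^{k} C(r+i+j-2, r-1) / C(r+i-2, r-1)` in `ℚ`.
Below `i : Fin k` and `i ∈ Finset.range k` are `0`-based (i.e. stand for `i-1`). -/
theorem stmt2 (k : ℕ) (hk : 1 ≤ k) (r j : ℕ) (hr : 1 ≤ r) :
    ((Matrix.det (Matrix.of fun i l : Fin k =>
        icb ((r : ℤ) + j - 1) ((j : ℤ) + ((l : ℕ) : ℤ) - ((i : ℕ) : ℤ))) : ℤ) : ℚ) =
      ∏ i ∈ Finset.range k,
        ((r - 1 + i + j).choose (r - 1) : ℚ) / ((r - 1 + i).choose (r - 1) : ℚ) := by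
  obtain ⟨r', rfl⟩ : ∃ r', r = r' + 1 := ⟨r - 1, by omega⟩
  simp only [Nat.add_sub_cancel]
  set P : ℕ → ℚ[X] := fun l => C (((r'+j).factorial : ℚ)) *
    ((∏ t ∈ Finset.Ico (l+1) k, (X + C (t:ℚ))) *
     ∏ t ∈ Finset.range l, (C (((r'+j : ℕ):ℚ) - t) - X)) with hP
  have hdeg : ∀ l : Fin k, (P l).natDegree < k := by
    intro l
    have h1 : (∏ t ∈ Finset.Ico ((l:ℕ)+1) k, (X + C (t:ℚ))).natDegree ≤ k - ((l:ℕ)+1) := by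
      refine le_trans (Polynomial.natDegree_prod_le _ _) ?_
      refine le_trans (Finset.sum_le_card_nsmul _ _ 1 fun t _ =>
        le_trans (Polynomial.natDegree_add_le _ _) ?_) ?_
      · simp [Polynomial.natDegree_X, Polynomial.natDegree_C]
      · simp [Nat.card_Ico]
    have h2 : (∏ t ∈ Finset.range (l:ℕ), (C (((r'+j : ℕ):ℚ) - t) - X)).natDegree ≤ (l:ℕ) := by
      refine le_trans (Polynomial.natDegree_prod_le _ _) ?_
      refine le_trans (Finset.sum_le_card_nsmul _ _ 1 fun t _ =>
        le_trans (Polynomial.natDegree_sub_le _ _) ?_) (by simp)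
      rw [Polynomial.natDegree_C, Polynomial.natDegree_X]
      simp
    have h3 := Polynomial.natDegree_mul_le (p := C (((r'+j).factorial : ℚ)))
      (q := (∏ t ∈ Finset.Ico ((l:ℕ)+1) k, (X + C (t:ℚ))) *
        ∏ t ∈ Finset.range (l:ℕ), (C (((r'+j : ℕ):ℚ) - t) - X))
    have h4 := Polynomial.natDegree_mul_le
      (p := ∏ t ∈ Finset.Ico ((l:ℕ)+1) k, (X + C (t:ℚ)))
      (q := ∏ t ∈ Finset.range (l:ℕ), (C (((r'+j : ℕ):ℚ) - t) - X))
    have h5 : (C (((r'+j).factorial : ℚ))).natDegree = 0 := Polynomial.natDegree_C _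
    have := l.isLt
    simp only [hP]
    omega
  have heval : ∀ (l : ℕ) (x : ℚ), (P l).eval x = ((r'+j).factorial : ℚ) *
      ((∏ t ∈ Finset.Ico (l+1) k, (x + t)) *
       ∏ t ∈ Finset.range l, (((r'+j : ℕ):ℚ) - t - x)) := by
    intro l x
    simp [hP, Polynomial.eval_prod]
  have hvdm : (Matrix.vandermonde fun i : Fin k => (j:ℚ) - (i:ℕ)).det
      = (Matrix.vandermonde fun i : Fin k => (((r'+j:ℕ)):ℚ) - (i:ℕ)).det := by
    rw [Matrix.det_vandermonde, Matrix.det_vandermonde]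
    exact Finset.prod_congr rfl fun i _ => Finset.prod_congr rfl fun l _ => by ring
  have tri : (Matrix.of fun i l : Fin k => (P (l:ℕ)).eval (((r'+j:ℕ):ℚ) - (i:ℕ))).det
      = ∏ i : Fin k, (((i:ℕ).factorial : ℚ) * ((r'+j + (k - 1 - (i:ℕ))).factorial : ℚ)) := by
    rw [Matrix.det_of_lowerTriangular _ ?htri]
    case htri =>
      intro i l hlt
      replace hlt : (i:ℕ) < (l:ℕ) := hlt
      rw [Matrix.of_apply, heval]
      have hz : ∏ t ∈ Finset.range (l:ℕ), (((r'+j : ℕ):ℚ) - t - (((r'+j:ℕ):ℚ) - (i:ℕ))) = 0 := by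
        apply Finset.prod_eq_zero (i := (i:ℕ))
        · simpa using hlt
        · ring
      rw [hz]
      ring
    · refine Finset.prod_congr rfl fun i _ => ?_
      rw [Matrix.of_apply, heval]
      have hA : ∏ t ∈ Finset.Ico ((i:ℕ)+1) k, ((((r'+j:ℕ)):ℚ) - (i:ℕ) + t)
          = ((r'+j + (k - 1 - (i:ℕ))).factorial : ℚ) / (((r'+j).factorial : ℚ)) := by
        rw [Finset.prod_Ico_eq_prod_range]
        rw [Finset.prod_congr rfl (fun (s : ℕ) _ => show (((r'+j:ℕ)):ℚ) - (i:ℕ) + (((i:ℕ)+1) + s : ℕ)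
            = ((r'+j:ℕ):ℚ) + 1 + s by push_cast; ring)]
        rw [prod_asc']
        have : r' + j + (k - ((i:ℕ)+1)) = r' + j + (k - 1 - (i:ℕ)) := by
          have := i.isLt; omega
        rw [this]
      have hB : ∏ t ∈ Finset.range (i:ℕ), (((r'+j : ℕ):ℚ) - t - (((r'+j:ℕ):ℚ) - (i:ℕ)))
          = ((i:ℕ).factorial : ℚ) := by
        rw [Finset.prod_congr rfl (fun (t : ℕ) ht => show ((r'+j : ℕ):ℚ) - (t:ℕ) - (((r'+j:ℕ):ℚ) - (i:ℕ))
            = (((i:ℕ):ℕ):ℚ) - (t:ℕ) by push_cast; ring)]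
        exact prod_desc _
      rw [hA, hB]
      have hne : (((r'+j).factorial : ℚ)) ≠ 0 := by exact_mod_cast (r'+j).factorial_ne_zero
      field_simp
  set Mq : Matrix (Fin k) (Fin k) ℚ := Matrix.of fun i l : Fin k =>
    ((icb ((r' : ℤ) + j) ((j : ℤ) + (l:ℕ) - (i:ℕ)) : ℤ) : ℚ) with hMq
  have key : (∏ i : Fin k, (((j + (k - 1 - (i:ℕ))).factorial : ℚ) * ((r' + (i:ℕ)).factorial : ℚ)))
      * Mq.det = ∏ i : Fin k, (((i:ℕ).factorial : ℚ) * ((r'+j + (k - 1 - (i:ℕ))).factorial : ℚ)) := by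
    rw [← Matrix.det_mul_column]
    have e1 : (Matrix.of fun i l : Fin k =>
        (((j + (k - 1 - (i:ℕ))).factorial : ℚ) * ((r' + (i:ℕ)).factorial : ℚ)) * Mq i l)
        = Matrix.of fun i l : Fin k => (P (l:ℕ)).eval ((j:ℚ) - (i:ℕ)) := by
      ext i l
      rw [Matrix.of_apply, Matrix.of_apply, heval, hMq, Matrix.of_apply]
      exact entry_eq k r' j i l i.isLt l.isLt
    rw [e1, det_eval_eq (fun l => P (l:ℕ)) hdeg _ _ hvdm, tri]
  have hcast : ((Matrix.det (Matrix.of fun i l : Fin k =>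
      icb (((r'+1:ℕ) : ℤ) + j - 1) ((j : ℤ) + ((l : ℕ) : ℤ) - ((i : ℕ) : ℤ))) : ℤ) : ℚ)
      = Mq.det := by
    rw [show ((Matrix.det (Matrix.of fun i l : Fin k =>
        icb (((r'+1:ℕ) : ℤ) + j - 1) ((j : ℤ) + ((l : ℕ) : ℤ) - ((i : ℕ) : ℤ))) : ℤ) : ℚ)
      = (Int.castRingHom ℚ) (Matrix.det (Matrix.of fun i l : Fin k =>
        icb (((r'+1:ℕ) : ℤ) + j - 1) ((j : ℤ) + ((l : ℕ) : ℤ) - ((i : ℕ) : ℤ)))) from rfl]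
    rw [RingHom.map_det]
    congr 1
    ext i l
    simp only [Matrix.map_apply, Matrix.of_apply, hMq]
    rw [show (((r'+1:ℕ) : ℤ) + j - 1) = ((r' : ℤ) + j) by push_cast; ring]
    rfl
  rw [hcast]
  -- final arithmetic
  have hcne : (∏ i : Fin k, (((j + (k - 1 - (i:ℕ))).factorial : ℚ) * ((r' + (i:ℕ)).factorial : ℚ))) ≠ 0 := by
    refine Finset.prod_ne_zero_iff.mpr fun i _ => mul_ne_zero ?_ ?_ <;>
      exact_mod_cast Nat.factorial_ne_zero _
  have hMqdet : Mq.det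
      = (∏ i : Fin k, (((i:ℕ).factorial : ℚ) * ((r'+j + (k - 1 - (i:ℕ))).factorial : ℚ)))
        / (∏ i : Fin k, (((j + (k - 1 - (i:ℕ))).factorial : ℚ) * ((r' + (i:ℕ)).factorial : ℚ))) := by
    rw [eq_div_iff hcne, mul_comm]
    exact key
  rw [hMqdet, Finset.prod_div_distrib]
  have hBne : (∏ i ∈ Finset.range k, (((r'+i).choose r' : ℕ) : ℚ)) ≠ 0 := by
    refine Finset.prod_ne_zero_iff.mpr fun i _ => ?_
    exact_mod_cast Nat.ne_of_gt (Nat.choose_pos (Nat.le_add_right r' i))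
  rw [div_eq_div_iff hcne hBne]
  rw [Fin.prod_univ_eq_prod_range
      (fun i => (((i:ℕ).factorial : ℚ) * ((r'+j + (k - 1 - i)).factorial : ℚ))) k,
    Fin.prod_univ_eq_prod_range
      (fun i => (((j + (k - 1 - i)).factorial : ℚ) * ((r' + i).factorial : ℚ))) k,
    ← Finset.prod_mul_distrib, ← Finset.prod_mul_distrib]
  have natid : (∏ i ∈ Finset.range k, i.factorial * ((r'+j+(k-1-i)).factorial * (r'+i).choose r'))
      = ∏ i ∈ Finset.range k, (r'+i+j).choose r' * ((j+(k-1-i)).factorial * (r'+i).factorial) := by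
    simp only [← mul_assoc]
    rw [Finset.prod_mul_distrib, Finset.prod_mul_distrib, Finset.prod_mul_distrib,
      Finset.prod_mul_distrib]
    rw [show (∏ i ∈ Finset.range k, (r'+j+(k-1-i)).factorial)
        = ∏ i ∈ Finset.range k, (r'+j+i).factorial from
      Finset.prod_range_reflect (fun i => (r'+j+i).factorial) k]
    rw [show (∏ i ∈ Finset.range k, (j+(k-1-i)).factorial)
        = ∏ i ∈ Finset.range k, (j+i).factorial from
      Finset.prod_range_reflect (fun i => (j+i).factorial) k]
    rw [← Finset.prod_mul_distrib, ← Finset.prod_mul_distrib, ← Finset.prod_mul_distrib,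
      ← Finset.prod_mul_distrib]
    refine Finset.prod_congr rfl fun i _ => ?_
    have := termwise r' j i
    rw [← mul_assoc] at this
    rw [this]
    ring
  calc (∏ i ∈ Finset.range k, ((i.factorial : ℚ) * ((r'+j + (k - 1 - i)).factorial : ℚ)
          * (((r'+i).choose r' : ℕ) : ℚ)))
      = ((∏ i ∈ Finset.range k, i.factorial * ((r'+j+(k-1-i)).factorial * (r'+i).choose r') : ℕ) : ℚ) := by
        push_cast; exact Finset.prod_congr rfl fun i _ => by ring
    _ = ((∏ i ∈ Finset.range k, (r'+i+j).choose r' * ((j+(k-1-i)).factorial * (r'+i).factorial) : ℕ) : ℚ) := by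
        rw [natid]
    _ = ∏ i ∈ Finset.range k, (((r'+i+j).choose r' : ℕ) : ℚ)
          * ((((j + (k - 1 - i)).factorial : ℚ)) * (((r' + i).factorial : ℚ))) := by
        push_cast; ring
end

section
/- For all integers k ≥ 1, r ≥ 1 and j ≥ 0, the simple k-Narayana number, defined as the k×k determinant det((C(r-1, j+l-i))_{1≤i,l≤k}), equals the product ∏_{i=0}^{k-1} C(r-1+i, j) / C(j+i, j) of rational numbers. -/
open Finset Matrix Polynomial Nat

lemma icb_natCast_sub_natCast (a m t : ℕ) :
    icb a ((m : ℤ) - t) = if t ≤ m then (a.choose (m - t) : ℤ) else 0 := by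
  unfold icb
  split_ifs
  · rw [show (m : ℤ) - t = ((m - t : ℕ) : ℤ) by omega, Int.toNat_natCast, Int.toNat_natCast]
  · omega
  · rw [Nat.choose_eq_zero_of_lt (by omega), Nat.cast_zero]
  · rfl

/-- Vandermonde's identity, with the sum cut off at `k > i` and the second factor extended by
zero to negative lower indices. -/
lemma sum_fin_choose_mul_icb (a m : ℕ) {k i : ℕ} (hi : i < k) :
    ∑ t : Fin k, (i.choose t : ℤ) * icb a ((m : ℤ) - t) = ((a + i).choose m : ℤ) := by
  set f : ℕ → ℤ := fun t => (i.choose t : ℤ) * icb a ((m : ℤ) - t)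
  have hf : ∀ t, i < t ∨ m < t → f t = 0 := by
    rintro t (ht | ht)
    · simp [f, Nat.choose_eq_zero_of_lt ht]
    · simp [f, icb_natCast_sub_natCast, show ¬t ≤ m by omega]
  have hcut : ∀ s, min k (m + 1) ≤ s → ∑ t ∈ range s, f t = ∑ t ∈ range (min k (m + 1)), f t :=
    fun s hs => (sum_subset (range_subset_range.2 hs) fun t hts ht => hf t (by
      simp only [mem_range] at hts ht; omega)).symm
  rw [Fin.sum_univ_eq_sum_range f, hcut k (min_le_left _ _), ← hcut (m + 1) (min_le_right _ _),
    add_comm a i, Nat.add_choose_eq, Nat.sum_antidiagonal_eq_sum_range_succ_mk, Nat.cast_sum]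
  refine sum_congr rfl fun t ht => ?_
  have ht : t ≤ m := Nat.lt_succ_iff.1 (mem_range.1 ht)
  simp [f, icb_natCast_sub_natCast, ht]

section CommRing

variable {R : Type*} [CommRing R]

lemma det_pascal (k : ℕ) : (of fun i t : Fin k => ((i : ℕ).choose t : R)).det = 1 := by
  rw [det_of_isLowerTriangular _ fun i t h => by
    simp [Nat.choose_eq_zero_of_lt (show (i : ℕ) < t from h)]]
  simp

lemma det_vandermonde_fin_val (k : ℕ) :
    (vandermonde fun i : Fin k => (i : R)).det = ∏ i ∈ range k, (i ! : R) := by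
  cases k with
  | zero => simp
  | succ n => rw [det_vandermonde_id_eq_superFactorial, ← prod_range_succ_factorial]; push_cast; rfl

lemma factorial_mul_choose_add (n b l : ℕ) :
    ((b + l)! * n.choose (b + l) : R) =
      b ! * n.choose b * (descPochhammer R l).eval ((n : R) - b) := by
  by_cases h : b ≤ n
  · rw [← Nat.cast_sub h, descPochhammer_eval_eq_descFactorial]
    norm_cast
    rw [← descFactorial_eq_factorial_mul_choose, ← descFactorial_eq_factorial_mul_choose,
      ← descFactorial_mul_descFactorial (Nat.le_add_right b l), Nat.add_sub_cancel_left, mul_comm]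
  · rw [Nat.choose_eq_zero_of_lt (by omega), Nat.choose_eq_zero_of_lt (by omega)]
    simp

lemma det_eval_descPochhammer_fin_val_add [IsDomain R] (k : ℕ) (c : R) :
    (of fun i l : Fin k => (descPochhammer R l).eval ((i : R) + c)).det =
      ∏ i ∈ range k, (i ! : R) := by
  rw [← det_eval_matrixOfPolynomials_eq_det_vandermonde _ _ (fun l => descPochhammer_natDegree R l)
    (fun l => monic_descPochhammer R l), det_vandermonde_add, det_vandermonde_fin_val]

end CommRing

/-- Multiplying by the unitriangular Pascal matrix `(C(i, t))` turns the Toeplitz matrix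
`(C(a, j + l - i))` into `(C(a + i, j + l))`. -/
lemma det_icb_eq_det_choose (a j k : ℕ) :
    (of fun i l : Fin k => icb a ((j : ℤ) + (l : ℕ) - (i : ℕ))).det =
      (of fun i l : Fin k => ((a + i).choose (j + l) : ℤ)).det := by
  have hmul : (of fun i t : Fin k => ((i : ℕ).choose t : ℤ)) *
      (of fun i l : Fin k => icb a ((j : ℤ) + (l : ℕ) - (i : ℕ))) =
        of fun i l : Fin k => ((a + i).choose (j + l) : ℤ) := by
    ext i l
    simpa [mul_apply] using sum_fin_choose_mul_icb a (j + l) i.isLt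
  rw [← hmul, det_mul, det_pascal, one_mul]

/-- The column scaling by `j! / (j + l)!` and the row scaling by `C(a + i, j)` reduce
`(C(a + i, j + l))` to the falling factorials `(a + i - j)_l`, a Vandermonde determinant. -/
lemma det_choose_add_add {K : Type*} [Field K] [CharZero K] (a j k : ℕ) :
    (of fun i l : Fin k => ((a + i).choose (j + l) : K)).det =
      ∏ i ∈ range k, ((a + i).choose j : K) / ((j + i).choose j : K) := by
  have hfactorial : ∀ n : ℕ, (n ! : K) ≠ 0 := fun n => Nat.cast_ne_zero.2 n.factorial_ne_zero
  have hentry : ∀ i l : Fin k, ((a + i).choose (j + l) : K) = ((a + i).choose j : K) *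
      (descPochhammer K l).eval ((i : K) + ((a : K) - j)) * (j ! / (j + l)! : K) := by
    intro i l
    have := factorial_mul_choose_add (R := K) (a + i) j l
    rw [show ((i : ℕ) : K) + ((a : K) - j) = ((a + i : ℕ) : K) - j by push_cast; ring]
    field_simp [hfactorial]
    linear_combination this
  have hfactor : (of fun i l : Fin k => ((a + i).choose (j + l) : K)) =
      diagonal (fun i : Fin k => ((a + i).choose j : K)) *
        (of fun i l : Fin k => (descPochhammer K l).eval ((i : K) + ((a : K) - j))) *
          diagonal (fun l : Fin k => (j ! / (j + l)! : K)) := by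
    ext i l
    simp [hentry]
  rw [hfactor, det_mul, det_mul, det_diagonal, det_diagonal, det_eval_descPochhammer_fin_val_add,
    Fin.prod_univ_eq_prod_range (fun i => ((a + i).choose j : K)),
    Fin.prod_univ_eq_prod_range (fun l => (j ! / (j + l)! : K)), ← prod_mul_distrib,
    ← prod_mul_distrib]
  refine prod_congr rfl fun i _ => ?_
  have hchoose : ((j + i).choose j : K) ≠ 0 :=
    Nat.cast_ne_zero.2 (Nat.choose_pos (Nat.le_add_right j i)).ne'
  have hfac : ((j + i)! : K) = (j + i).choose j * i ! * j ! := by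
    rw [add_comm j i]
    exact_mod_cast (add_choose_mul_factorial_mul_factorial i j).symm
  rw [hfac]
  field_simp [hfactorial]

theorem stmt3_general (k : ℕ) (r j : ℕ) (hr : 1 ≤ r) :
    ((Matrix.det (Matrix.of fun i l : Fin k =>
        icb ((r : ℤ) - 1) ((j : ℤ) + ((l : ℕ) : ℤ) - ((i : ℕ) : ℤ))) : ℤ) : ℚ) =
      ∏ i ∈ Finset.range k,
        ((r - 1 + i).choose j : ℚ) / ((j + i).choose j : ℚ) := by
  obtain ⟨a, rfl⟩ : ∃ a, r = a + 1 := ⟨r - 1, by omega⟩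
  rw [show ((a + 1 : ℕ) : ℤ) - 1 = a by push_cast; ring, det_icb_eq_det_choose, Int.cast_det,
    Nat.add_sub_cancel, ← det_choose_add_add]
  congr 1

/-- The simple `k`-Narayana number `𝒩_k(r,j) = det((C(r-1, j+l-i))_{1≤i,l≤k})`
equals `∏_{i=0}^{k-1} C(r-1+i, j) / C(j+i, j)` in `ℚ`.
Below `i, l : Fin k` are `0`-based. -/
theorem stmt3 (k : ℕ) (hk : 1 ≤ k) (r j : ℕ) (hr : 1 ≤ r) :
    ((Matrix.det (Matrix.of fun i l : Fin k =>
        icb ((r : ℤ) - 1) ((j : ℤ) + ((l : ℕ) : ℤ) - ((i : ℕ) : ℤ))) : ℤ) : ℚ) =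
      ∏ i ∈ Finset.range k,
        ((r - 1 + i).choose j : ℚ) / ((j + i).choose j : ℚ) :=
  stmt3_general k r j hr
end

section
/- For all integers k ≥ 1, r ≥ 1 and j ≥ 0, the following identity of rational numbers holds: ∏_{i=1}^{k} C(r+i+j-2, r-1) / C(r+i-2, r-1) = ∏_{i=0}^{k-1} C(r+j-1+i, j) / C(j+i, j). (This expresses that the multiset k-Narayana number 𝔑_k(r,j) equals the simple k-Narayana number 𝒩_k(r+j-1, j) in its product form.) -/
/-- `𝔑_k(r,j) = 𝒩_k(r+j-1, j)` in product form:
`∏_{i=1}^{k} C(r+i+j-2, r-1)/C(r+i-2, r-1) = ∏_{i=0}^{k-1} C(r+j-1+i, j)/C(j+i, j)`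
as rational numbers. The products below run over `i ∈ Finset.range k`,
i.e. `0`-based `i` (so on the left `r+i+j-2` becomes `r-1+i+j`). -/
theorem stmt4 (k : ℕ) (hk : 1 ≤ k) (r j : ℕ) (hr : 1 ≤ r) :
    (∏ i ∈ Finset.range k,
        ((r - 1 + i + j).choose (r - 1) : ℚ) / ((r - 1 + i).choose (r - 1) : ℚ)) =
      ∏ i ∈ Finset.range k,
        ((r + j - 1 + i).choose j : ℚ) / ((j + i).choose j : ℚ) := by
  obtain ⟨s, rfl⟩ := Nat.exists_eq_add_of_le hr
  apply Finset.prod_congr rfl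
  intro i _
  have h1 : 1 + s - 1 = s := by omega
  have h2 : 1 + s + j - 1 = s + j := by omega
  rw [h1, h2]
  rw [Nat.cast_choose ℚ (show s ≤ s + i + j by omega),
      Nat.cast_choose ℚ (show s ≤ s + i by omega),
      Nat.cast_choose ℚ (show j ≤ s + j + i by omega),
      Nat.cast_choose ℚ (show j ≤ j + i by omega)]
  have e1 : s + i + j - s = i + j := by omega
  have e2 : s + i - s = i := by omega
  have e3 : s + j + i - j = s + i := by omega
  have e4 : j + i - j = i := by omega
  rw [e1, e2, e3, e4, show s + j + i = s + i + j by ring]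
  have f1 : ((Nat.factorial s) : ℚ) ≠ 0 := by positivity
  have f2 : ((Nat.factorial (i+j)) : ℚ) ≠ 0 := by positivity
  have f3 : ((Nat.factorial (s+i)) : ℚ) ≠ 0 := by positivity
  have f4 : ((Nat.factorial j) : ℚ) ≠ 0 := by positivity
  have f5 : ((Nat.factorial i) : ℚ) ≠ 0 := by positivity
  field_simp
  ring
end

section
/- For all integers k ≥ 1, r ≥ 2 and j ≥ 0, the following identity of rational numbers holds: ∏_{i=1}^{k} C(r+i+j-2, r-1) / C(r+i-2, r-1) = Σ_{l=0}^{j} C(k(r-1)+j-l, k(r-1)) · N_k(r-1, l), where N_k(r-1, l) = Σ_{m=0}^{l} (-1)^{l-m} C(k(r-1)+1, l-m) ∏_{i=0}^{k-1} C(r-1+i+m, r-1) / C(r-1+i, r-1). (This expresses the multiset k-Narayana numbers as a binomially weighted sum of the k-Narayana numbers.) -/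
/-!
This is binomial inversion and holds for any sequence `f` in place of the multiset Narayana
numbers: with `n = k(r-1)` and `F = Σ f(m) Xᵐ`, `N_k(r-1, ·)` is the coefficient sequence of
`F · (1 - X)^(n+1)`, and multiplying back by `(1 - X)^-(n+1) = Σ C(n+a, n) Xᵃ` recovers `F`.
-/

/-- The (Sulanke) `k`-Narayana number
`N_k(s,l) = Σ_{m=0}^{l} (-1)^{l-m} C(ks+1, l-m) ∏_{i=0}^{k-1} C(s+i+m, s)/C(s+i, s)`. -/
def Nar (k s l : ℕ) : ℚ :=
  ∑ m ∈ Finset.range (l + 1), (-1) ^ (l - m) * ((k * s + 1).choose (l - m) : ℚ) *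
    ∏ i ∈ Finset.range k, ((s + i + m).choose s : ℚ) / ((s + i).choose s : ℚ)

namespace PowerSeries

variable {R : Type*} [CommRing R]

theorem coeff_one_sub_X_pow (d q : ℕ) :
    coeff q ((1 - X : R⟦X⟧) ^ d) = (-1) ^ q * d.choose q := by
  induction d generalizing q with
  | zero => cases q <;> simp [coeff_one]
  | succ d ih =>
    rw [pow_succ, mul_sub, mul_one, map_sub]
    cases q with
    | zero => simp [ih]
    | succ q =>
      rw [coeff_succ_mul_X, ih, ih, Nat.choose_succ_succ']
      push_cast
      ring

theorem coeff_mk_mul_one_sub_X_pow (d l : ℕ) (f : ℕ → R) :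
    coeff l (mk f * (1 - X : R⟦X⟧) ^ d) =
      ∑ m ∈ Finset.range (l + 1), (-1) ^ (l - m) * (d.choose (l - m) : R) * f m := by
  rw [coeff_mul, Finset.Nat.sum_antidiagonal_eq_sum_range_succ_mk]
  refine Finset.sum_congr rfl fun m _ => ?_
  rw [coeff_mk, coeff_one_sub_X_pow, mul_comm]

end PowerSeries

open PowerSeries in
theorem sum_choose_mul_sum_neg_one_pow_choose {R : Type*} [CommRing R] (n j : ℕ) (f : ℕ → R) :
    ∑ l ∈ Finset.range (j + 1), ((n + j - l).choose n : R) *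
        ∑ m ∈ Finset.range (l + 1), (-1) ^ (l - m) * ((n + 1).choose (l - m) : R) * f m = f j := by
  have h := congrArg (fun g => coeff j (mk f * g)) (invOneSubPow R (n + 1)).inv_val
  simp only [mul_one, invOneSubPow_inv_eq_one_sub_pow, ← mul_assoc, coeff_mk] at h
  rw [← h, coeff_mul, Finset.Nat.sum_antidiagonal_eq_sum_range_succ_mk]
  refine Finset.sum_congr rfl fun l hl => ?_
  rw [Finset.mem_range] at hl
  rw [invOneSubPow_val_succ_eq_mk_add_choose, coeff_mk, coeff_mk_mul_one_sub_X_pow,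
    mul_comm, Nat.add_sub_assoc (by omega)]

/-- The product runs over `0`-based `i ∈ Finset.range k`. -/
theorem stmt5_general (k r j : ℕ) :
    (∏ i ∈ Finset.range k,
        ((r - 1 + i + j).choose (r - 1) : ℚ) / ((r - 1 + i).choose (r - 1) : ℚ)) =
      ∑ l ∈ Finset.range (j + 1),
        ((k * (r - 1) + j - l).choose (k * (r - 1)) : ℚ) * Nar k (r - 1) l :=
  (sum_choose_mul_sum_neg_one_pow_choose (k * (r - 1)) j fun m =>
    ∏ i ∈ Finset.range k, ((r - 1 + i + m).choose (r - 1) : ℚ) / ((r - 1 + i).choose (r - 1))).symm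

/-- The multiset `k`-Narayana number `𝔑_k(r,j) = ∏_{i=1}^{k} C(r+i+j-2, r-1)/C(r+i-2, r-1)`
equals `Σ_{l=0}^{j} C(k(r-1)+j-l, k(r-1)) · N_k(r-1, l)`.
The product below runs over `0`-based `i ∈ Finset.range k`. -/
theorem stmt5 (k r j : ℕ) (hk : 1 ≤ k) (hr : 2 ≤ r) :
    (∏ i ∈ Finset.range k,
        ((r - 1 + i + j).choose (r - 1) : ℚ) / ((r - 1 + i).choose (r - 1) : ℚ)) =
      ∑ l ∈ Finset.range (j + 1),
        ((k * (r - 1) + j - l).choose (k * (r - 1)) : ℚ) * Nar k (r - 1) l :=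
  stmt5_general k r j
end

section
/- For all integers k ≥ 1, r ≥ 1 and j ≥ 0, the following identity of rational numbers holds: ∏_{i=1}^{k} C(r+i+j-2, r-1) / C(r+i-2, r-1) = (∏_{i=0}^{k-1} (r+i)^{(j)}) / (j! · ∏_{i=2}^{k} i^{(j)}), where a^{(j)} = a(a+1)⋯(a+j-1) denotes the ascending factorial (Pochhammer symbol), with a^{(0)} = 1. (This expresses the k-Narayana series as the generalized hypergeometric function ₖF_{k-1}(r, …, r+k-1; 2, …, k; t): the left-hand side is the j-th coefficient 𝔑_k(r,j) and the right-hand side is the j-th hypergeometric coefficient.) -/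
/-- Ascending factorial (Pochhammer symbol) `ascF a j = a(a+1)⋯(a+j-1)`, with `ascF a 0 = 1`. -/
def ascF (a : ℚ) (j : ℕ) : ℚ := ∏ i ∈ Finset.range j, (a + i)

lemma ascF_nat (m j : ℕ) : ascF ((m : ℚ) + 1) j = ((m + j).factorial : ℚ) / (m.factorial : ℚ) := by
  induction j with
  | zero =>
    simp only [ascF, Finset.range_zero, Finset.prod_empty, Nat.add_zero]
    exact (div_self (Nat.cast_ne_zero.mpr m.factorial_ne_zero)).symm
  | succ n ih =>
    rw [ascF, Finset.prod_range_succ, ← ascF, ih]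
    have h : ((m + (n+1)).factorial : ℚ) = ((m + n).factorial : ℚ) * (m + n + 1) := by
      rw [show m + (n+1) = (m+n)+1 from by ring, Nat.factorial_succ]
      push_cast; ring
    rw [h]
    have : (m.factorial : ℚ) ≠ 0 := Nat.cast_ne_zero.mpr m.factorial_ne_zero
    rw [div_mul_eq_mul_div]
    ring_nf

lemma ascF_ne (m j : ℕ) : ascF ((m : ℚ) + 1) j ≠ 0 := by
  rw [ascF_nat]
  positivity

/-- The multiset `k`-Narayana number `𝔑_k(r,j) = ∏_{i=1}^{k} C(r+i+j-2, r-1)/C(r+i-2, r-1)`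
equals the `j`-th coefficient `(∏_{i=0}^{k-1} (r+i)^{(j)}) / (j! · ∏_{i=2}^{k} i^{(j)})`
of the hypergeometric function `ₖF_{k-1}(r, …, r+k-1; 2, …, k; t)`.
The first two products below run over `0`-based `i ∈ Finset.range k`. -/
theorem stmt8 (k r j : ℕ) (hk : 1 ≤ k) (hr : 1 ≤ r) :
    (∏ i ∈ Finset.range k,
        ((r - 1 + i + j).choose (r - 1) : ℚ) / ((r - 1 + i).choose (r - 1) : ℚ)) =
      (∏ i ∈ Finset.range k, ascF ((r : ℚ) + i) j) /
        ((j.factorial : ℚ) * ∏ i ∈ Finset.Icc 2 k, ascF (i : ℚ) j) := by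
  obtain ⟨m, rfl⟩ : ∃ m, r = m + 1 := ⟨r - 1, (Nat.succ_pred_eq_of_pos hr).symm⟩
  have hterm : ∀ i : ℕ,
      ((m + 1 - 1 + i + j).choose (m + 1 - 1) : ℚ) / ((m + 1 - 1 + i).choose (m + 1 - 1) : ℚ)
        = ascF (((m : ℚ) + 1) + i) j / ascF ((i : ℚ) + 1) j := by
    intro i
    simp only [Nat.add_sub_cancel]
    rw [Nat.cast_choose ℚ (by omega : m ≤ m + i + j), Nat.cast_choose ℚ (by omega : m ≤ m + i)]
    have h1 : (((m + i : ℕ) : ℚ) + 1) = ((m:ℚ)+1) + i := by push_cast; ring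
    have e1 := ascF_nat (m + i) j
    rw [h1] at e1
    rw [e1, ascF_nat i j]
    rw [show m + i + j - m = i + j from by omega, show m + i - m = i from by omega]
    have h2 : ((m.factorial : ℚ)) ≠ 0 := Nat.cast_ne_zero.mpr m.factorial_ne_zero
    have h3 : (((i+j).factorial : ℚ)) ≠ 0 := Nat.cast_ne_zero.mpr (i+j).factorial_ne_zero
    have h4 : ((i.factorial : ℚ)) ≠ 0 := Nat.cast_ne_zero.mpr i.factorial_ne_zero
    have h5 : (((m+i).factorial : ℚ)) ≠ 0 := Nat.cast_ne_zero.mpr (m+i).factorial_ne_zero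
    have h6 : (((m+i+j).factorial : ℚ)) ≠ 0 := Nat.cast_ne_zero.mpr (m+i+j).factorial_ne_zero
    field_simp
  rw [Finset.prod_congr rfl (fun i _ => hterm i), Finset.prod_div_distrib]
  congr 1
  · apply Finset.prod_congr rfl
    intro i _
    congr 1
    push_cast; ring
  · -- ∏ i in range k, ascF (i+1) j = j! * ∏ i in Icc 2 k, ascF i j
    obtain ⟨n, rfl⟩ : ∃ n, k = n + 1 := ⟨k - 1, (Nat.succ_pred_eq_of_pos hk).symm⟩
    rw [Finset.prod_range_succ']
    have hIcc : (∏ i ∈ Finset.Icc 2 (n+1), ascF ((i : ℚ)) j)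
        = ∏ i ∈ Finset.range n, ascF (((2 + i : ℕ) : ℚ)) j := by
      rw [← Finset.Ico_add_one_right_eq_Icc, Finset.prod_Ico_eq_prod_range]
      norm_num
      rfl
    rw [hIcc]
    have h0 : ascF ((0 : ℕ) + 1 : ℚ) j = (j.factorial : ℚ) := by
      have := ascF_nat 0 j
      simpa using this
    have : ∀ i ∈ Finset.range n, ascF (((i+1 : ℕ) : ℚ) + 1) j = ascF (((2 + i : ℕ) : ℚ)) j := by
      intro i _
      congr 1
      push_cast; ring
    rw [Finset.prod_congr rfl this, h0, mul_comm]
end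

section
/- Let k and n be integers with 1 ≤ n < k. With the SL_k(ℂ)-action on ℂ[x_{i,j} : 1 ≤ i ≤ k, 1 ≤ j ≤ n] given by x_{i,j} ↦ Σ_m g_{i,m} x_{m,j}, every polynomial fixed by all elements of SL_k(ℂ) is a constant. -/
/-- The action of `g ∈ SL_k(ℂ)` on `ℂ[x_{i,j} : 1 ≤ i ≤ k, 1 ≤ j ≤ n]` as the
`ℂ`-algebra endomorphism substituting `x_{i,j} ↦ Σ_m g_{i,m} x_{m,j}`. -/
noncomputable def slAct (k n : ℕ) (g : Matrix.SpecialLinearGroup (Fin k) ℂ) :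
    MvPolynomial (Fin k × Fin n) ℂ →ₐ[ℂ] MvPolynomial (Fin k × Fin n) ℂ :=
  MvPolynomial.aeval fun p => ∑ m : Fin k, g.val p.1 m • MvPolynomial.X (m, p.2)

/-!
For `n < k`, the group `SL_k` acts transitively on the `k × n` matrices whose top `n × n` minor
is nonzero: such a matrix `[A; C]` is the image of `[1; 0]` under the block matrix
`[A 0; C D]`, where `D = diag((det A)⁻¹, 1, …, 1)`. An invariant polynomial `P` is therefore
constant, say equal to `c`, off the hypersurface where that minor vanishes, so
`(P - c) · minor` vanishes everywhere; over an infinite domain it is the zero polynomial, and the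
minor is not.
-/

open Matrix MvPolynomial

theorem MvPolynomial.eq_C_of_eval_eq_of_eval_ne_zero {σ R : Type*} [CommRing R] [IsDomain R]
    [Infinite R] {P Q : MvPolynomial σ R} {c : R} (hQ : Q ≠ 0)
    (h : ∀ x, eval x Q ≠ 0 → eval x P = c) : P = C c := by
  have hprod : (P - C c) * Q = 0 := by
    refine MvPolynomial.funext fun x => ?_
    rw [map_mul, map_sub, eval_C, map_zero]
    by_cases hx : eval x Q = 0
    · rw [hx, mul_zero]
    · rw [h x hx, sub_self, zero_mul]
  exact sub_eq_zero.mp ((mul_eq_zero.mp hprod).resolve_right hQ)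

namespace Matrix

variable {R ι m : Type*} [Fintype m] [DecidableEq m]

theorem eval_det_submatrix_mvPolynomialX [CommRing R] (f : m → ι) (M : Matrix ι m R) :
    eval (fun p => M p.1 p.2) (det ((mvPolynomialX ι m R).submatrix f id)) =
      det (M.submatrix f id) := by
  rw [RingHom.map_det]
  congr 1
  ext i j
  simp [mvPolynomialX_apply]

theorem det_submatrix_mvPolynomialX_ne_zero [CommRing R] [Nontrivial R] {f : m → ι}
    (hf : Function.Injective f) : det ((mvPolynomialX ι m R).submatrix f id) ≠ 0 := by
  have : (mvPolynomialX ι m R).submatrix f id =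
      (rename (Prod.map f id)).toRingHom.mapMatrix (mvPolynomialX m m R) := by
    ext i j
    simp
  rw [this, ← RingHom.map_det]
  exact (map_ne_zero_iff _ (rename_injective _ (hf.prodMap Function.injective_id))).mpr
    (det_mvPolynomialX_ne_zero m R)

variable {K : Type*} [Field K] {l : Type*} [Fintype l] [DecidableEq l] [Nonempty l]

theorem exists_det_fromBlocks_zero₁₂_eq_one (A : Matrix m m K) (hA : A.det ≠ 0)
    (C : Matrix l m K) : ∃ D : Matrix l l K, (fromBlocks A 0 C D).det = 1 := by
  obtain ⟨i₀⟩ := ‹Nonempty l›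
  refine ⟨diagonal (Function.update 1 i₀ A.det⁻¹), ?_⟩
  rw [det_fromBlocks_zero₁₂, det_diagonal, Finset.prod_update_of_mem (Finset.mem_univ _)]
  simp [hA]

theorem exists_specialLinearGroup_mul_fromRows_eq (M : Matrix (m ⊕ l) m K)
    (hM : M.toRows₁.det ≠ 0) :
    ∃ g : SpecialLinearGroup (m ⊕ l) K, g.val * (fromRows 1 0 : Matrix (m ⊕ l) m K) = M := by
  obtain ⟨D, hD⟩ := exists_det_fromBlocks_zero₁₂_eq_one M.toRows₁ hM M.toRows₂
  refine ⟨⟨_, hD⟩, ?_⟩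
  show fromBlocks _ 0 _ D * (fromRows 1 0 : Matrix (m ⊕ l) m K) = M
  rw [fromBlocks_mul_fromRows]
  simp [fromRows_toRows]

theorem exists_specialLinearGroup_mul_reindex_fromRows_eq [Fintype ι] [DecidableEq ι]
    (e : m ⊕ l ≃ ι) (M : Matrix ι m K) (hM : (M.submatrix (e ∘ Sum.inl) id).det ≠ 0) :
    ∃ g : SpecialLinearGroup ι K,
      g.val * reindex e (.refl m) (fromRows 1 0 : Matrix (m ⊕ l) m K) = M := by
  obtain ⟨g, hg⟩ := exists_specialLinearGroup_mul_fromRows_eq (reindex e.symm (.refl m) M) hM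
  refine ⟨⟨reindex e e g, by rw [det_reindex_self, g.2]⟩, ?_⟩
  show reindex e e g.val * reindex e (.refl m) (fromRows 1 0 : Matrix (m ⊕ l) m K) = M
  simpa [submatrix_mul_equiv] using congrArg (reindex e (.refl m)) hg

end Matrix

theorem eval_slAct (k n : ℕ) (g : Matrix.SpecialLinearGroup (Fin k) ℂ)
    (P : MvPolynomial (Fin k × Fin n) ℂ) (M : Matrix (Fin k) (Fin n) ℂ) :
    eval (fun p => M p.1 p.2) (slAct k n g P) = eval (fun p => (g.val * M) p.1 p.2) P := by
  rw [slAct, aeval_eq_bind₁, MvPolynomial.eval, eval₂Hom_bind₁]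
  congr 2
  funext p
  simp [mul_apply]

theorem stmt13_general (k n : ℕ) (hnk : n < k)
    (P : MvPolynomial (Fin k × Fin n) ℂ)
    (hP : ∀ g : Matrix.SpecialLinearGroup (Fin k) ℂ, slAct k n g P = P) :
    ∃ c : ℂ, P = MvPolynomial.C c := by
  let e : Fin n ⊕ Fin (k - n) ≃ Fin k := finSumFinEquiv.trans (finCongr (by omega))
  have : Nonempty (Fin (k - n)) := ⟨⟨0, by omega⟩⟩
  let E : Matrix (Fin k) (Fin n) ℂ := reindex e (.refl _) (fromRows 1 0)
  refine ⟨eval (fun p => E p.1 p.2) P, eq_C_of_eval_eq_of_eval_ne_zero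
    (det_submatrix_mvPolynomialX_ne_zero (e.injective.comp Sum.inl_injective)) fun x hx => ?_⟩
  obtain ⟨g, hg⟩ : ∃ g : SpecialLinearGroup (Fin k) ℂ, g.val * E = of fun i j => x (i, j) :=
    exists_specialLinearGroup_mul_reindex_fromRows_eq e _
      (by rwa [← eval_det_submatrix_mvPolynomialX])
  rw [show x = (fun p => (g.val * E) p.1 p.2) by rw [hg]; rfl, ← eval_slAct, hP]

/-- For `1 ≤ n < k`, every polynomial in `ℂ[x_{i,j}]` fixed by all of `SL_k(ℂ)`
is constant. -/
theorem stmt13 (k n : ℕ) (hn : 1 ≤ n) (hnk : n < k)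
    (P : MvPolynomial (Fin k × Fin n) ℂ)
    (hP : ∀ g : Matrix.SpecialLinearGroup (Fin k) ℂ, slAct k n g P = P) :
    ∃ c : ℂ, P = MvPolynomial.C c :=
  stmt13_general k n hnk P hP
end

section
/- For all integers k and r with k ≥ r ≥ 2 and all j ≥ 0, the following identity of rational numbers holds: ∏_{i=1}^{k} C(r+i+j-2, r-1) / C(r+i-2, r-1) = ∏_{i=1}^{r-1} C(k+i+j-1, k) / C(k+i-1, k). (That is, the multiset k-Narayana number satisfies 𝔑_k(r,j) = 𝔑_{r-1}(k+1,j), so the multiset k-Narayana series satisfies 𝔑_{k,r} = 𝔑_{r-1,k+1}.) -/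
open Finset

lemma key15 (a n : ℕ) : n.choose a * (n + 1) = (n + 1).choose a * (n + 1 - a) :=
  Nat.choose_mul_succ_eq n a

lemma cell15 (a i j : ℕ) :
    ((a + i + j).choose a : ℚ) / ((a + i).choose a : ℚ) =
      ∏ m ∈ range j, (((a : ℚ) + i + m + 1) / ((i : ℚ) + m + 1)) := by
  induction j with
  | zero =>
    rw [Nat.add_zero, prod_range_zero, div_self]
    exact_mod_cast (Nat.choose_pos (Nat.le_add_right a i)).ne'
  | succ j ih =>
    rw [prod_range_succ, ← ih]
    have h0 : ((a + i).choose a : ℚ) ≠ 0 := by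
      exact_mod_cast (Nat.choose_pos (Nat.le_add_right a i)).ne'
    have h1 : ((a + i + j).choose a : ℚ) ≠ 0 := by
      exact_mod_cast (Nat.choose_pos (le_trans (Nat.le_add_right a i) (Nat.le_add_right _ j))).ne'
    have h2 : ((i : ℚ) + j + 1) ≠ 0 := by positivity
    have hkey : ((a + i + j).choose a : ℚ) * (((a : ℚ) + i + j) + 1) =
        ((a + i + j + 1).choose a : ℚ) * ((i : ℚ) + j + 1) := by
      have := key15 a (a + i + j)
      have hsub : a + i + j + 1 - a = i + j + 1 := by omega
      rw [hsub] at this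
      exact_mod_cast this
    have heq : (a + i + (j + 1)) = (a + i + j + 1) := rfl
    rw [heq, div_mul_div_comm, div_eq_div_iff h0 (mul_ne_zero h0 h2)]
    linear_combination (-((a + i).choose a : ℚ)) * hkey

lemma prodshift15 (a b c : ℕ) :
    ∏ i ∈ range b, ((a : ℚ) + i + c + 1) =
      (∏ t ∈ range (a + b), ((t : ℚ) + c + 1)) / ∏ t ∈ range a, ((t : ℚ) + c + 1) := by
  rw [prod_range_add, mul_comm, mul_div_assoc, div_self, mul_one]
  · exact prod_congr rfl (fun i _ => by push_cast; ring)
  · exact (prod_pos (fun t _ => by positivity)).ne'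

lemma symm15 (a b c : ℕ) :
    ∏ i ∈ range b, (((a : ℚ) + i + c + 1) / ((i : ℚ) + c + 1)) =
      ∏ i ∈ range a, (((b : ℚ) + i + c + 1) / ((i : ℚ) + c + 1)) := by
  rw [prod_div_distrib, prod_div_distrib, prodshift15, prodshift15]
  have h1 : (∏ t ∈ range a, ((t : ℚ) + c + 1)) ≠ 0 := (prod_pos (fun t _ => by positivity)).ne'
  have h2 : (∏ t ∈ range b, ((t : ℚ) + c + 1)) ≠ 0 := (prod_pos (fun t _ => by positivity)).ne'
  rw [add_comm b a, div_div, div_div, mul_comm]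

/-- For `k ≥ r ≥ 2` the multiset `k`-Narayana number satisfies `𝔑_k(r,j) = 𝔑_{r-1}(k+1,j)`:
`∏_{i=1}^{k} C(r+i+j-2, r-1)/C(r+i-2, r-1) = ∏_{i=1}^{r-1} C(k+i+j-1, k)/C(k+i-1, k)`.
The products below run over `0`-based `i` (`Finset.range`). -/
theorem stmt15 (k r j : ℕ) (hr : 2 ≤ r) (hk : r ≤ k) :
    (∏ i ∈ Finset.range k,
        ((r - 1 + i + j).choose (r - 1) : ℚ) / ((r - 1 + i).choose (r - 1) : ℚ)) =
      ∏ i ∈ Finset.range (r - 1),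
        ((k + i + j).choose k : ℚ) / ((k + i).choose k : ℚ) := by
  calc (∏ i ∈ Finset.range k,
        ((r - 1 + i + j).choose (r - 1) : ℚ) / ((r - 1 + i).choose (r - 1) : ℚ))
      = ∏ i ∈ range k, ∏ m ∈ range j,
          ((((r - 1 : ℕ) : ℚ) + i + m + 1) / ((i : ℚ) + m + 1)) :=
        prod_congr rfl (fun i _ => cell15 (r - 1) i j)
    _ = ∏ m ∈ range j, ∏ i ∈ range k,
          ((((r - 1 : ℕ) : ℚ) + i + m + 1) / ((i : ℚ) + m + 1)) := prod_comm
    _ = ∏ m ∈ range j, ∏ i ∈ range (r - 1),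
          (((k : ℚ) + i + m + 1) / ((i : ℚ) + m + 1)) :=
        prod_congr rfl (fun m _ => symm15 (r - 1) k m)
    _ = ∏ i ∈ range (r - 1), ∏ m ∈ range j,
          (((k : ℚ) + i + m + 1) / ((i : ℚ) + m + 1)) := prod_comm
    _ = ∏ i ∈ Finset.range (r - 1),
        ((k + i + j).choose k : ℚ) / ((k + i).choose k : ℚ) :=
        prod_congr rfl (fun i _ => (cell15 k i j).symm)
end

section
/- For all integers r ≥ 1 and j ≥ 0, the 2-Narayana number admits the closed form: Σ_{l=0}^{j} (-1)^{j-l} C(2r+1, j-l) · C(r+l, r) · C(r+1+l, r) / C(r+1, r) = (1/r) · C(r, j) · C(r, j+1), as an identity of rational numbers. -/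
/-!
Both sides satisfy the recurrence `(j + 1) (j + 2) a (j + 1) = (r - j) (r - j - 1) a j` with
the same initial value. For `C(r, j) C(r, j + 1)` this is `(j + 1) C(r, j + 1) = (r - j) C(r, j)`
applied twice. For the alternating sum it follows by telescoping from a Wilf–Zeilberger relation
between the summands at `j` and `j + 1`, whose certificate (the output of Zeilberger's algorithm)
is the summand multiplied by `l (l + 1)`, with `j - l` replaced by `j + 1 - l`.
-/

open Finset

namespace Nat

theorem cast_choose_succ_right_mul {R : Type*} [CommRing R] (n k : ℕ) :
    (n.choose (k + 1) : R) * (k + 1) = n.choose k * (n - k) := by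
  rcases le_or_gt k n with hkn | hnk
  · have h := congrArg (Nat.cast : ℕ → R) (choose_succ_right_eq n k)
    push_cast [hkn] at h
    exact h
  · simp [choose_eq_zero_of_lt hnk, choose_eq_zero_of_lt (hnk.trans (lt_succ_self k))]

theorem cast_choose_add_one_add_mul {R : Type*} [CommRing R] (k n : ℕ) :
    ((k + 1 + n).choose k : R) * (n + 1) = (k + n).choose k * (k + n + 1) := by
  have h := choose_mul_succ_eq (k + n) k
  rw [show k + n + 1 - k = n + 1 by omega] at h
  rw [show k + 1 + n = k + n + 1 by ring]
  have hR := congrArg (Nat.cast : ℕ → R) h.symm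
  push_cast at hR
  exact hR

end Nat

/-- In the product `∏_{i=0}^{1} C(r + i + l, r) / C(r + i, r)` of `N₂(r, j)` the denominator
`C(r, r) = 1` is dropped. -/
def twoNarayanaSummand (r j l : ℕ) : ℚ :=
  (-1) ^ (j - l) * ((2 * r + 1).choose (j - l) : ℚ) *
    ((r + l).choose r : ℚ) * ((r + 1 + l).choose r : ℚ) / ((r + 1).choose r : ℚ)

def twoNarayana (r j : ℕ) : ℚ := ∑ l ∈ range (j + 1), twoNarayanaSummand r j l

def twoNarayanaCert (r j l : ℕ) : ℚ :=
  (-1) ^ (j + 1 - l) * l * (l + 1) * ((2 * r + 1).choose (j + 1 - l) : ℚ) *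
    ((r + l).choose r : ℚ) * ((r + 1 + l).choose r : ℚ) / ((r + 1).choose r : ℚ)

theorem twoNarayanaSummand_wz_pair (r j l : ℕ) (hl : l ≤ j) :
    ((j : ℚ) + 1) * (j + 2) * twoNarayanaSummand r (j + 1) l
        - (r - j) * (r - j - 1) * twoNarayanaSummand r j l =
      twoNarayanaCert r j l - twoNarayanaCert r j (l + 1) := by
  obtain ⟨d, rfl⟩ := Nat.exists_eq_add_of_le hl
  have hB :
      ((2 * r + 1).choose (d + 1) : ℚ) = (2 * r + 1).choose d * (2 * r + 1 - d) / (d + 1) := by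
    rw [eq_div_iff (by positivity)]
    exact_mod_cast Nat.cast_choose_succ_right_mul (R := ℚ) (2 * r + 1) d
  have hQ : ((r + 1 + l).choose r : ℚ) = (r + l).choose r * (r + l + 1) / (l + 1) := by
    rw [eq_div_iff (by positivity)]
    exact_mod_cast Nat.cast_choose_add_one_add_mul (R := ℚ) r l
  have hS : ((r + 1 + (l + 1)).choose r : ℚ) = (r + 1 + l).choose r * (r + l + 2) / (l + 2) := by
    rw [eq_div_iff (by positivity)]
    have := Nat.cast_choose_add_one_add_mul (R := ℚ) r (l + 1)
    rw [show r + (l + 1) = r + 1 + l by ring] at this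
    push_cast at this
    linear_combination this
  simp only [twoNarayanaSummand, twoNarayanaCert, show l + d + 1 - l = d + 1 by omega,
    show l + d - l = d by omega, show l + d + 1 - (l + 1) = d by omega,
    show r + (l + 1) = r + 1 + l by ring]
  rw [hS, hB, hQ]
  push_cast
  field_simp
  ring

theorem twoNarayana_succ (r j : ℕ) :
    ((j : ℚ) + 1) * (j + 2) * twoNarayana r (j + 1) =
      (r - j) * (r - j - 1) * twoNarayana r j := by
  have htele : ∑ l ∈ range (j + 1), (((j : ℚ) + 1) * (j + 2) * twoNarayanaSummand r (j + 1) l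
      - (r - j) * (r - j - 1) * twoNarayanaSummand r j l) =
      twoNarayanaCert r j 0 - twoNarayanaCert r j (j + 1) := by
    rw [← sum_range_sub']
    exact sum_congr rfl fun l hl => twoNarayanaSummand_wz_pair r j l (mem_range_succ_iff.mp hl)
  have hfirst : twoNarayanaCert r j 0 = 0 := by simp [twoNarayanaCert]
  have hlast : twoNarayanaCert r j (j + 1) =
      ((j : ℚ) + 1) * (j + 2) * twoNarayanaSummand r (j + 1) (j + 1) := by
    simp only [twoNarayanaCert, twoNarayanaSummand, Nat.sub_self]
    push_cast
    ring
  rw [sum_sub_distrib, ← mul_sum, ← mul_sum, hfirst, hlast] at htele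
  rw [twoNarayana, sum_range_succ, twoNarayana]
  linear_combination htele

theorem twoNarayana_zero (r : ℕ) : twoNarayana r 0 = 1 := by
  simp [twoNarayana, twoNarayanaSummand, Nat.choose_succ_self_right, Nat.cast_add_one_ne_zero]

theorem mul_eq_choose_mul_choose_of_recurrence {K : Type*} [Field K] [CharZero K] (r : ℕ)
    (a : ℕ → K)
    (h : ∀ j : ℕ, ((j : K) + 1) * (j + 2) * a (j + 1) = (r - j) * (r - j - 1) * a j) (j : ℕ) :
    r * a j = a 0 * r.choose j * r.choose (j + 1) := by
  induction j with
  | zero => simp [mul_comm]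
  | succ j ih =>
    have hA := Nat.cast_choose_succ_right_mul (R := K) r j
    have hB := Nat.cast_choose_succ_right_mul (R := K) r (j + 1)
    push_cast at hB
    refine mul_left_cancel₀ (a := ((j : K) + 1) * (j + 2))
      (mul_ne_zero (Nat.cast_add_one_ne_zero j) (by norm_cast)) ?_
    calc ((j : K) + 1) * (j + 2) * (r * a (j + 1)) = r * ((r - j) * (r - j - 1) * a j) := by
          rw [← h]; ring
      _ = a 0 * (r.choose j * (r - j)) * (r.choose (j + 1) * (r - (j + 1))) := by
          rw [← mul_assoc, mul_comm (r : K), mul_assoc, ih]; ring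
      _ = ((j : K) + 1) * (j + 2) * (a 0 * r.choose (j + 1) * r.choose (j + 1 + 1)) := by
          rw [← hA, ← hB]; ring

theorem cast_mul_twoNarayana (r j : ℕ) : r * twoNarayana r j = r.choose j * r.choose (j + 1) := by
  rw [mul_eq_choose_mul_choose_of_recurrence r _ (twoNarayana_succ r), twoNarayana_zero, one_mul]

/-- The `2`-Narayana number has the closed form of the classical Narayana number:
`Σ_{l=0}^{j} (-1)^{j-l} C(2r+1, j-l) C(r+l, r) C(r+1+l, r)/C(r+1, r)
  = (1/r) C(r,j) C(r,j+1)` in `ℚ`. -/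
theorem stmt17 (r j : ℕ) (hr : 1 ≤ r) :
    (∑ l ∈ Finset.range (j + 1), (-1) ^ (j - l) * ((2 * r + 1).choose (j - l) : ℚ) *
        ((r + l).choose r : ℚ) * ((r + 1 + l).choose r : ℚ) / ((r + 1).choose r : ℚ)) =
      (1 / (r : ℚ)) * (r.choose j : ℚ) * (r.choose (j + 1) : ℚ) := by
  have hr0 : (r : ℚ) ≠ 0 := by positivity
  show twoNarayana r j = _
  calc twoNarayana r j = r * twoNarayana r j / r := (mul_div_cancel_left₀ _ hr0).symm
    _ = _ := by rw [cast_mul_twoNarayana]; ring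
end

section
/- Let k ≥ 1, n ≥ 1 and j ≥ 0 be integers and let 1 ≤ a_1 < a_2 < ⋯ < a_k ≤ n. Then the two k×k determinants det((C(a_{k-l+1}+j+l-i-1, j+l-i))_{1≤i,l≤k}) and det((C(a_i+j-i, j+l-i))_{1≤i,l≤k}) are equal. (These are the two determinantal expressions for the value {a_1,…,a_k}_j of the Hilbert polynomial of the Schubert variety X(a_1,…,a_k).) -/
lemma icb_of_neg {a b : ℤ} (h : b < 0) : icb a b = 0 := by
  unfold icb; rw [if_neg]; omega

lemma icb_of_gt {a b : ℤ} (h : a < b) : icb a b = 0 := by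
  unfold icb; rw [if_neg]; omega

lemma icb_nonneg_eq (a b : ℤ) (ha : 0 ≤ a) (hb : 0 ≤ b) :
    icb a b = (a.toNat.choose b.toNat : ℤ) := by
  unfold icb
  split_ifs with h
  · rfl
  · rw [Nat.choose_eq_zero_of_lt (by omega), Nat.cast_zero]

lemma icb_pascal (x b : ℤ) (hx : 0 ≤ x) : icb (x + 1) b = icb x b + icb x (b - 1) := by
  rcases lt_or_ge b 0 with h | h
  · rw [icb_of_neg h, icb_of_neg h, icb_of_neg (by omega)]; ring
  rcases eq_or_lt_of_le h with h0 | h0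
  · subst b
    rw [icb_of_neg (by omega : (0:ℤ) - 1 < 0)]
    rw [icb_nonneg_eq _ _ (by omega) le_rfl, icb_nonneg_eq _ _ hx le_rfl]
    simp
  · rw [icb_nonneg_eq _ _ (by omega) h, icb_nonneg_eq _ _ hx h, icb_nonneg_eq _ _ hx (by omega)]
    have h1 : (x + 1).toNat = x.toNat + 1 := by omega
    have h2 : b.toNat = (b - 1).toNat + 1 := by omega
    rw [h1, h2, Nat.choose_succ_succ]
    push_cast
    ring

lemma icb_vandermonde (K : ℕ) (A : ℤ) (hA : 0 ≤ A) :
    ∀ l : ℕ, l < K → ∀ m : ℤ,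
      icb (A + l) m = ∑ s ∈ Finset.range K, icb l s * icb A (m - l + s) := by
  intro l
  induction l with
  | zero =>
    intro hl m
    obtain ⟨K', rfl⟩ : ∃ K', K = K' + 1 := ⟨K - 1, by omega⟩
    rw [Finset.sum_eq_single 0]
    · have h0 : icb ((0:ℕ) : ℤ) ((0:ℕ) : ℤ) = 1 := by
        unfold icb
        rw [if_pos (by simp)]
        simp
      push_cast at h0 ⊢
      rw [h0]
      ring_nf
    · intro s _ hs
      rw [icb_of_gt (by push_cast; omega), zero_mul]
    · intro h; exact absurd (Finset.mem_range.2 (by omega)) h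
  | succ l ih =>
    intro hl m
    obtain ⟨K', rfl⟩ : ∃ K', K = K' + 1 := ⟨K - 1, by omega⟩
    have hlK : l < K' + 1 := by omega
    have hlK' : l < K' := by omega
    -- LHS via Pascal
    have e1 : A + ((l + 1 : ℕ) : ℤ) = (A + l) + 1 := by push_cast; ring
    rw [e1, icb_pascal _ _ (by positivity), ih hlK m, ih hlK (m - 1)]
    -- RHS : expand icb (l+1) s via Pascal
    have hsplit : ∑ s ∈ Finset.range (K' + 1),
          icb ((l + 1 : ℕ) : ℤ) (s : ℤ) * icb A (m - ((l + 1 : ℕ) : ℤ) + s)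
        = ∑ s ∈ Finset.range (K' + 1),
          (icb (l : ℤ) (s : ℤ) * icb A ((m - 1) - l + s)
            + icb (l : ℤ) ((s : ℤ) - 1) * icb A ((m - 1) - l + s)) := by
      apply Finset.sum_congr rfl
      intro s _
      have e2 : ((l + 1 : ℕ) : ℤ) = (l : ℤ) + 1 := by push_cast; ring
      rw [e2, icb_pascal _ _ (by positivity), add_mul,
        show m - ((l : ℤ) + 1) + (s : ℤ) = (m - 1) - l + s from by ring]
    rw [hsplit, Finset.sum_add_distrib]
    rw [add_comm (∑ s ∈ Finset.range (K' + 1), icb (l : ℤ) (s : ℤ) * icb A ((m - 1) - l + s))]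
    congr 1
    -- shifted sum equals the original sum
    rw [Finset.sum_range_succ' (fun s => icb (l:ℤ) ((s:ℤ) - 1) * icb A ((m - 1) - l + s)) K']
    rw [show icb (l:ℤ) (((0:ℕ):ℤ) - 1) * icb A ((m - 1) - l + ((0:ℕ):ℤ)) = 0 by
      exact mul_eq_zero_of_left (icb_of_neg (by omega)) _]
    rw [add_zero]
    rw [Finset.sum_range_succ (fun s => icb (l:ℤ) (s:ℤ) * icb A (m - l + s)) K']
    rw [show icb (l:ℤ) ((K':ℕ):ℤ) * icb A (m - l + ((K':ℕ):ℤ)) = 0 by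
      exact mul_eq_zero_of_left (icb_of_gt (by push_cast; omega)) _]
    rw [add_zero]
    apply Finset.sum_congr rfl
    intro s _
    congr 1
    · congr 1; push_cast; ring
    · congr 1; push_cast; ring

lemma icb_self (l : ℤ) (hl : 0 ≤ l) : icb l l = 1 := by
  unfold icb
  rw [if_pos ⟨hl, le_rfl⟩]
  simp

/-- The two determinantal expressions for `{a_1,…,a_k}_j`, the value of the Hilbert
polynomial of the Schubert variety `X(a_1,…,a_k)`, coincide:
`det((C(a_{k-l+1}+j+l-i-1, j+l-i))_{1≤i,l≤k}) = det((C(a_i+j-i, j+l-i))_{1≤i,l≤k})`.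
Here `i, l : Fin k` are `0`-based, so `a_{k-l+1}` becomes `a l.rev`, the first upper
argument `a_{k-l+1}+j+l-i-1` becomes `a l.rev + j + l - i - 1`, and the second upper
argument `a_i+j-i` becomes `a i + j - i - 1`. -/
theorem stmt19 (k n j : ℕ) (hk : 1 ≤ k) (hn : 1 ≤ n) (a : Fin k → ℕ)
    (ha : StrictMono a) (ha1 : ∀ i, 1 ≤ a i) (han : ∀ i, a i ≤ n) :
    Matrix.det (Matrix.of fun i l : Fin k =>
      icb ((a l.rev : ℤ) + j + ((l : ℕ) : ℤ) - ((i : ℕ) : ℤ) - 1)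
        ((j : ℤ) + ((l : ℕ) : ℤ) - ((i : ℕ) : ℤ))) =
    Matrix.det (Matrix.of fun i l : Fin k =>
      icb ((a i : ℤ) + j - ((i : ℕ) : ℤ) - 1)
        ((j : ℤ) + ((l : ℕ) : ℤ) - ((i : ℕ) : ℤ))) := by
  -- `a i ≥ i + 1`
  have hbound : ∀ i : Fin k, (i : ℕ) < a i := by
    have key : ∀ m : ℕ, ∀ i : Fin k, (i : ℕ) = m → m < a i := by
      intro m
      induction m with
      | zero => intro i _; exact ha1 i
      | succ m ihm =>
        intro i h
        have hm : m < k := by omega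
        have h1 : (⟨m, hm⟩ : Fin k) < i := by
          rw [Fin.lt_def]; simp; omega
        have h2 := ha h1
        have h3 := ihm ⟨m, hm⟩ rfl
        omega
    intro i; exact key i i rfl
  -- the matrices
  set M1 : Matrix (Fin k) (Fin k) ℤ := Matrix.of fun i l : Fin k =>
      icb ((a l.rev : ℤ) + j + ((l : ℕ) : ℤ) - ((i : ℕ) : ℤ) - 1)
        ((j : ℤ) + ((l : ℕ) : ℤ) - ((i : ℕ) : ℤ)) with hM1
  set M2 : Matrix (Fin k) (Fin k) ℤ := Matrix.of fun i l : Fin k =>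
      icb ((a i : ℤ) + j - ((i : ℕ) : ℤ) - 1)
        ((j : ℤ) + ((l : ℕ) : ℤ) - ((i : ℕ) : ℤ)) with hM2
  set N : Matrix (Fin k) (Fin k) ℤ := Matrix.of fun i l : Fin k =>
      icb ((a i : ℤ) + j + ((l : ℕ) : ℤ) - ((i : ℕ) : ℤ) - 1)
        ((j : ℤ) + ((l : ℕ) : ℤ) - ((i : ℕ) : ℤ)) with hN
  set T : Matrix (Fin k) (Fin k) ℤ := Matrix.of fun s l : Fin k =>
      icb (((l : ℕ) : ℤ)) (((s : ℕ) : ℤ)) with hT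
  -- Step 1: det M1 = det N
  have step1 : M1.det = N.det := by
    have hrev : M1 = (N.submatrix Fin.revPerm Fin.revPerm).transpose := by
      ext i l
      simp only [hM1, hN, Matrix.transpose_apply, Matrix.submatrix_apply, Matrix.of_apply,
        Fin.revPerm_apply]
      have hi : ((i.rev : ℕ) : ℤ) = (k : ℤ) - 1 - i := by
        rw [Fin.val_rev]; have := i.isLt; push_cast; omega
      have hl : ((l.rev : ℕ) : ℤ) = (k : ℤ) - 1 - l := by
        rw [Fin.val_rev]; have := l.isLt; push_cast; omega
      rw [hi, hl]
      congr 1 <;> ring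
    rw [hrev, Matrix.det_transpose, Matrix.det_submatrix_equiv_self]
  -- Step 2: N = M2 * T
  have step2 : N = M2 * T := by
    ext i l
    rw [Matrix.mul_apply]
    simp only [hN, hM2, hT, Matrix.of_apply]
    have hA : (0:ℤ) ≤ (a i : ℤ) + j - ((i : ℕ) : ℤ) - 1 := by
      have := hbound i; omega
    have hv := icb_vandermonde k ((a i : ℤ) + j - ((i : ℕ) : ℤ) - 1) hA
      (l : ℕ) l.isLt ((j : ℤ) + ((l : ℕ) : ℤ) - ((i : ℕ) : ℤ))
    have e1 : (a i : ℤ) + j + ((l : ℕ) : ℤ) - ((i : ℕ) : ℤ) - 1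
        = ((a i : ℤ) + j - ((i : ℕ) : ℤ) - 1) + ((l : ℕ) : ℤ) := by ring
    rw [e1, hv, ← Fin.sum_univ_eq_sum_range (fun s => icb ((l : ℕ) : ℤ) (s : ℤ) *
      icb ((a i : ℤ) + j - ((i : ℕ) : ℤ) - 1)
        ((j : ℤ) + ((l : ℕ) : ℤ) - ((i : ℕ) : ℤ) - ((l : ℕ) : ℤ) + (s : ℤ))) k]
    apply Finset.sum_congr rfl
    intro s _
    rw [mul_comm]
    congr 1
    ring_nf
  -- Step 3: det T = 1
  have step3 : T.det = 1 := by
    have htri : T.BlockTriangular id := by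
      intro s l h
      simp only [id] at h
      simp only [hT, Matrix.of_apply]
      exact icb_of_gt (by exact_mod_cast h)
    rw [Matrix.det_of_upperTriangular htri]
    apply Finset.prod_eq_one
    intro s _
    simp only [hT, Matrix.of_apply]
    exact icb_self _ (by positivity)
  rw [step1, step2, Matrix.det_mul, step3, mul_one]
end
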